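/- Let n ≥ 2, p > 0, K ∈ K_o^n, and let f : S^{n-1} → (0,∞) be continuous. Then there exist δ > 0 and M > 0 such that, with h_t(v) = (h_K(v)^p + t f(v)^p)^{1/p}, the inequality |ρ_{[h_t]}(u) − ρ_K(u)| ≤ M|t| holds for all u ∈ S^{n-1} and all t ∈ (−δ, δ). -/

import Mathlib

open MeasureTheory Metric Set Filter
open scoped RealInnerProductSpace ENNReal Pointwise Topology

/-- The support function of a set `K`. -/
noncomputable def supportFn {n : ℕ} (K : Set (EuclideanSpace ℝ (Fin n)))
    (v : EuclideanSpace ℝ (Fin n)) : ℝ :=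
  sSup ((fun y => ⟪y, v⟫) '' K)

/-- The radial function of a set `K` at `u`. -/
noncomputable def radialFn {n : ℕ} (K : Set (EuclideanSpace ℝ (Fin n)))
    (u : EuclideanSpace ℝ (Fin n)) : ℝ :=
  sSup {l : ℝ | 0 ≤ l ∧ l • u ∈ K}

/-- The Wulff shape `[f] = ⋂_{v ∈ Sⁿ⁻¹} {x : ⟨x,v⟩ ≤ f v}`. -/
def wulff (n : ℕ) (f : EuclideanSpace ℝ (Fin n) → ℝ) : Set (EuclideanSpace ℝ (Fin n)) :=
  ⋂ v ∈ sphere (0 : EuclideanSpace ℝ (Fin n)) 1, {x | ⟪x, v⟫ ≤ f v}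

/-! On the unit sphere `h_K ≥ ε > 0` and `f ^ p` is bounded, and `s ↦ (1 + s) ^ (1 / p)` is
Lipschitz near `0`; hence `h_t` lies between `(1 - M|t|) h_K` and `(1 + M|t|) h_K`. The Wulff shape
is monotone in its data and `[a h_K] = a K` for a convex body `K`, so `[h_t]` is squeezed between
`(1 - M|t|) K` and `(1 + M|t|) K`. The radial function is monotone and positively homogeneous, so
`ρ_{[h_t]}` differs from `ρ_K` by at most `M|t| ρ_K`, and `ρ_K` is bounded. -/

section SupportFunction

variable {n : ℕ} {K : Set (EuclideanSpace ℝ (Fin n))}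

lemma inner_le_supportFn (hK : IsCompact K) {y : EuclideanSpace ℝ (Fin n)} (hy : y ∈ K)
    (v : EuclideanSpace ℝ (Fin n)) : ⟪y, v⟫ ≤ supportFn K v :=
  le_csSup (hK.image (continuous_id.inner continuous_const)).bddAbove ⟨y, hy, rfl⟩

lemma supportFn_smul {a : ℝ} (ha : 0 ≤ a) (v : EuclideanSpace ℝ (Fin n)) :
    supportFn (a • K) v = a * supportFn K v := by
  have himage : (fun y => ⟪y, v⟫) '' (a • K) = a • ((fun y => ⟪y, v⟫) '' K) := by
    simp only [← image_smul, image_image, real_inner_smul_left, smul_eq_mul]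
  rw [supportFn, himage, Real.sSup_smul_of_nonneg ha, smul_eq_mul, supportFn]

lemma le_supportFn_of_closedBall_subset {ε : ℝ} (hK : IsCompact K) (hε : 0 ≤ ε)
    (hεK : closedBall 0 ε ⊆ K) {v : EuclideanSpace ℝ (Fin n)} (hv : ‖v‖ = 1) :
    ε ≤ supportFn K v := by
  have hεv : ε • v ∈ K := hεK (by simp [norm_smul, hv, abs_of_nonneg hε])
  simpa [real_inner_smul_left, real_inner_self_eq_norm_sq, hv] using inner_le_supportFn hK hεv v

lemma wulff_mono {g g' : EuclideanSpace ℝ (Fin n) → ℝ} (h : ∀ v ∈ sphere 0 1, g v ≤ g' v) :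
    wulff n g ⊆ wulff n g' :=
  biInter_mono subset_rfl fun v hv _ hx => le_trans hx (h v hv)

lemma subset_wulff_supportFn (hK : IsCompact K) : K ⊆ wulff n (supportFn K) :=
  fun _ hy => mem_iInter₂.2 fun v _ => inner_le_supportFn hK hy v

lemma wulff_supportFn_subset (hK : IsCompact K) (hKconv : Convex ℝ K) (hne : K.Nonempty) :
    wulff n (supportFn K) ⊆ K := by
  intro x hx
  by_contra hxK
  obtain ⟨φ, c, hφK, hφx⟩ := geometric_hahn_banach_closed_point hKconv hK.isClosed hxK
  set v := (InnerProductSpace.toDual ℝ (EuclideanSpace ℝ (Fin n))).symm φ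
  have hφ : ∀ z, φ z = ⟪v, z⟫ := fun z => InnerProductSpace.toDual_symm_apply.symm
  have hv : v ≠ 0 := by
    rintro hv
    obtain ⟨y, hy⟩ := hne
    have := hφK y hy
    simp only [hφ, hv, inner_zero_left] at this hφx
    linarith
  set w := ‖v‖⁻¹ • v
  have hw : w ∈ sphere 0 1 := by simp [w, norm_smul, hv]
  have hinner : ∀ z, ⟪z, w⟫ = ‖v‖⁻¹ * φ z := fun z => by
    rw [real_inner_smul_right, real_inner_comm, hφ]
  have hKw : supportFn K w ≤ ‖v‖⁻¹ * c :=
    csSup_le (hne.image _) <| forall_mem_image.2 fun y hy => by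
      rw [hinner]; gcongr; exact (hφK y hy).le
  have hxw : ⟪x, w⟫ ≤ supportFn K w := mem_iInter₂.1 hx w hw
  rw [hinner] at hxw
  have : ‖v‖⁻¹ * c < ‖v‖⁻¹ * φ x := by gcongr
  linarith

lemma wulff_supportFn (hK : IsCompact K) (hKconv : Convex ℝ K) (hne : K.Nonempty) :
    wulff n (supportFn K) = K :=
  (wulff_supportFn_subset hK hKconv hne).antisymm (subset_wulff_supportFn hK)

lemma smul_subset_wulff (hK : IsCompact K) {a : ℝ} (ha : 0 ≤ a)
    {g : EuclideanSpace ℝ (Fin n) → ℝ} (hg : ∀ v ∈ sphere 0 1, a * supportFn K v ≤ g v) :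
    a • K ⊆ wulff n g :=
  (subset_wulff_supportFn (hK.smul a)).trans <|
    wulff_mono fun v hv => (supportFn_smul ha v).trans_le (hg v hv)

lemma wulff_subset_smul (hK : IsCompact K) (hKconv : Convex ℝ K) (hne : K.Nonempty) {a : ℝ}
    (ha : 0 ≤ a) {g : EuclideanSpace ℝ (Fin n) → ℝ}
    (hg : ∀ v ∈ sphere 0 1, g v ≤ a * supportFn K v) :
    wulff n g ⊆ a • K := by
  rw [← wulff_supportFn (hK.smul a) (hKconv.smul a) (hne.smul_set)]
  exact wulff_mono fun v hv => (hg v hv).trans_eq (supportFn_smul ha v).symm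

end SupportFunction

section RadialFunction

variable {n : ℕ} {K L : Set (EuclideanSpace ℝ (Fin n))} {u : EuclideanSpace ℝ (Fin n)}

lemma bddAbove_radialSet (hK : Bornology.IsBounded K) (hu : u ≠ 0) :
    BddAbove {l : ℝ | 0 ≤ l ∧ l • u ∈ K} := by
  obtain ⟨R, hR⟩ := hK.subset_closedBall 0
  refine ⟨R / ‖u‖, fun l ⟨hl, hlu⟩ => ?_⟩
  have := mem_closedBall_zero_iff.1 (hR hlu)
  rw [norm_smul, Real.norm_of_nonneg hl] at this
  exact (le_div_iff₀ (norm_pos_iff.2 hu)).2 this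

lemma radialFn_mono (hKL : K ⊆ L) (hK : (0 : EuclideanSpace ℝ (Fin n)) ∈ K)
    (hL : Bornology.IsBounded L) (hu : u ≠ 0) : radialFn K u ≤ radialFn L u :=
  csSup_le_csSup (bddAbove_radialSet hL hu) ⟨0, le_rfl, by simpa using hK⟩
    fun _ hl => ⟨hl.1, hKL hl.2⟩

lemma radialFn_smul {a : ℝ} (ha : 0 < a) : radialFn (a • K) u = a * radialFn K u := by
  have hset : {l : ℝ | 0 ≤ l ∧ l • u ∈ a • K} = a • {l : ℝ | 0 ≤ l ∧ l • u ∈ K} := by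
    ext l
    simp only [mem_ofPred_eq, mem_smul_set_iff_inv_smul_mem₀ ha.ne', smul_smul, smul_eq_mul,
      inv_pos.2 ha, mul_nonneg_iff_of_pos_left]
  rw [radialFn, hset, Real.sSup_smul_of_nonneg ha.le, smul_eq_mul, radialFn]

lemma radialFn_le_of_subset_closedBall {R : ℝ} (hR : 0 ≤ R) (hK : K ⊆ closedBall 0 R)
    (hu : ‖u‖ = 1) : radialFn K u ≤ R :=
  Real.sSup_le (fun l ⟨hl, hlu⟩ => by
    simpa [norm_smul, hu, abs_of_nonneg hl] using hK hlu) hR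

lemma abs_radialFn_sub_le_of_smul_subset (hK : Bornology.IsBounded K)
    (hK0 : (0 : EuclideanSpace ℝ (Fin n)) ∈ K) (hu : u ≠ 0) {c : ℝ} (hc0 : 0 ≤ c) (hc1 : c < 1)
    (hKL : (1 - c) • K ⊆ L) (hLK : L ⊆ (1 + c) • K) :
    |radialFn L u - radialFn K u| ≤ c * radialFn K u := by
  have h0 : ∀ a : ℝ, (0 : EuclideanSpace ℝ (Fin n)) ∈ a • K := fun a => ⟨0, hK0, smul_zero a⟩
  have hlower := radialFn_mono hKL (h0 _) ((hK.smul₀ _).subset hLK) hu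
  have hupper := radialFn_mono hLK (hKL (h0 _)) (hK.smul₀ _) hu
  rw [radialFn_smul (by linarith)] at hlower hupper
  rw [abs_le]
  constructor <;> linarith

end RadialFunction

lemma abs_radialFn_wulff_sub_le {n : ℕ} {K : Set (EuclideanSpace ℝ (Fin n))} (hK : IsCompact K)
    (hKconv : Convex ℝ K) (hK0 : (0 : EuclideanSpace ℝ (Fin n)) ∈ K)
    {g : EuclideanSpace ℝ (Fin n) → ℝ} {c : ℝ} (hc0 : 0 ≤ c) (hc1 : c < 1)
    (hg : ∀ v ∈ sphere 0 1, |g v - supportFn K v| ≤ c * supportFn K v)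
    {u : EuclideanSpace ℝ (Fin n)} (hu : u ≠ 0) :
    |radialFn (wulff n g) u - radialFn K u| ≤ c * radialFn K u := by
  have hinner : (1 - c) • K ⊆ wulff n g := smul_subset_wulff hK (by linarith)
    fun v hv => by linarith [(abs_le.1 (hg v hv)).1]
  have houter : wulff n g ⊆ (1 + c) • K := wulff_subset_smul hK hKconv ⟨0, hK0⟩
    (by linarith) fun v hv => by linarith [(abs_le.1 (hg v hv)).2]
  exact abs_radialFn_sub_le_of_smul_subset hK.isBounded hK0 hu hc0 hc1 hinner houter

lemma exists_abs_one_add_rpow_sub_one_le (q : ℝ) :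
    ∃ L ≥ (1 : ℝ), ∀ s : ℝ, |s| ≤ 1 / 2 → |(1 + s) ^ q - 1| ≤ L * |s| := by
  have hsmooth : ContDiffOn ℝ 1 (fun s : ℝ => (1 + s) ^ q) (Icc (-(1 / 2)) (1 / 2)) :=
    fun s hs => ((contDiffAt_const.add contDiffAt_id).rpow_const_of_ne
      (by rw [id]; linarith [hs.1])).contDiffWithinAt
  obtain ⟨L, hL⟩ := hsmooth.exists_lipschitzOnWith one_ne_zero (convex_Icc _ _) isCompact_Icc
  refine ⟨max L 1, le_max_right _ _, fun s hs => ?_⟩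
  have hsI : s ∈ Icc (-(1 / 2) : ℝ) (1 / 2) := abs_le.1 hs
  have h0I : (0 : ℝ) ∈ Icc (-(1 / 2) : ℝ) (1 / 2) := by norm_num
  calc |(1 + s) ^ q - 1| = dist ((1 + s) ^ q) ((1 + 0) ^ q) := by
        rw [Real.dist_eq, add_zero, Real.one_rpow]
    _ ≤ L * dist s 0 := hL.dist_le_mul s hsI 0 h0I
    _ ≤ max L 1 * |s| := by
        rw [Real.dist_0_eq_abs]; gcongr; exact le_max_left _ _

lemma abs_rpow_add_sub_le {p L h x c : ℝ} (hp : 0 < p) (hL0 : 0 ≤ L)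
    (hL : ∀ s : ℝ, |s| ≤ 1 / 2 → |(1 + s) ^ (1 / p) - 1| ≤ L * |s|)
    (hh : 0 < h) (hx : |x| ≤ c * h ^ p) (hc : c ≤ 1 / 2) :
    |(h ^ p + x) ^ (1 / p) - h| ≤ L * c * h := by
  have hhp : 0 < h ^ p := Real.rpow_pos_of_pos hh p
  set s := x / h ^ p
  have hs : |s| ≤ c := by rw [abs_div, abs_of_pos hhp]; exact (div_le_iff₀ hhp).2 hx
  have hs1 : 0 ≤ 1 + s := by linarith [neg_abs_le s]
  have hfactor : h ^ p + x = h ^ p * (1 + s) := by rw [mul_add, mul_one, mul_div_cancel₀ _ hhp.ne']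
  have hsplit : (h ^ p + x) ^ (1 / p) = h * (1 + s) ^ (1 / p) := by
    rw [hfactor, Real.mul_rpow hhp.le hs1, one_div, Real.rpow_rpow_inv hh.le hp.ne']
  calc |(h ^ p + x) ^ (1 / p) - h| = h * |(1 + s) ^ (1 / p) - 1| := by
        rw [hsplit, ← mul_sub_one, abs_mul, abs_of_pos hh]
    _ ≤ h * (L * c) := by
        gcongr; exact (hL s (hs.trans hc)).trans (by gcongr)
    _ = L * c * h := by ring

lemma abs_rpow_add_mul_sub_le {p L ε B h F t : ℝ} (hp : 0 < p) (hL1 : 1 ≤ L)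
    (hL : ∀ s : ℝ, |s| ≤ 1 / 2 → |(1 + s) ^ (1 / p) - 1| ≤ L * |s|)
    (hε : 0 < ε) (hεh : ε ≤ h) (hF0 : 0 ≤ F) (hFB : F ≤ B) (ht : L * (B / ε ^ p) * |t| ≤ 1 / 2) :
    |(h ^ p + t * F) ^ (1 / p) - h| ≤ L * (B / ε ^ p) * |t| * h := by
  have hB : 0 ≤ B := hF0.trans hFB
  have hx : |t * F| ≤ B / ε ^ p * |t| * h ^ p := calc
    |t * F| = |t| * F := by rw [abs_mul, abs_of_nonneg hF0]
    _ ≤ |t| * B := by gcongr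
    _ = B / ε ^ p * |t| * ε ^ p := by field_simp
    _ ≤ B / ε ^ p * |t| * h ^ p := by gcongr
  have hc : B / ε ^ p * |t| ≤ 1 / 2 :=
    (le_mul_of_one_le_left (by positivity) hL1).trans (by linarith)
  convert abs_rpow_add_sub_le hp (by linarith) hL (hε.trans_le hεh) hx hc using 1
  ring

theorem radialFn_wulff_lipschitz_in_t_general (n : ℕ) (p : ℝ) (hp : 0 < p)
    (K : Set (EuclideanSpace ℝ (Fin n)))
    (hK : IsCompact K) (hKconv : Convex ℝ K) (hKo : (0 : EuclideanSpace ℝ (Fin n)) ∈ interior K)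
    (f : EuclideanSpace ℝ (Fin n) → ℝ)
    (hf : ContinuousOn f (sphere (0 : EuclideanSpace ℝ (Fin n)) 1))
    (hfpos : ∀ v ∈ sphere (0 : EuclideanSpace ℝ (Fin n)) 1, 0 < f v) :
    ∃ δ > (0 : ℝ), ∃ M > (0 : ℝ),
      ∀ u ∈ sphere (0 : EuclideanSpace ℝ (Fin n)) 1, ∀ t ∈ Set.Ioo (-δ) δ,
        |radialFn (wulff n (fun v => (supportFn K v ^ p + t * f v ^ p) ^ (1 / p))) u
          - radialFn K u| ≤ M * |t| := by
  obtain ⟨L, hL1, hL⟩ := exists_abs_one_add_rpow_sub_one_le (1 / p)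
  obtain ⟨ε, hε, hεK⟩ := nhds_basis_closedBall.mem_iff.1 (mem_interior_iff_mem_nhds.1 hKo)
  obtain ⟨R, hR, hKR⟩ := hK.isBounded.subset_closedBall_lt 0 0
  obtain ⟨B, hB1, hB⟩ := ((isCompact_sphere 0 1).image_of_continuousOn
    (hf.rpow_const fun _ _ => Or.inr hp.le)).bddAbove.exists_ge 1
  set M := L * (B / ε ^ p)
  have hM : 0 < M := by positivity
  refine ⟨1 / (2 * M), by positivity, M * R, by positivity, fun u hu t ht => ?_⟩
  have hMt : M * |t| ≤ 1 / 2 := by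
    have := (lt_div_iff₀ (by positivity)).1 (abs_lt.2 ht)
    linarith
  have hclose (v) (hv : v ∈ sphere 0 1) :
      |(supportFn K v ^ p + t * f v ^ p) ^ (1 / p) - supportFn K v| ≤ M * |t| * supportFn K v :=
    abs_rpow_add_mul_sub_le hp hL1 hL hε
      (le_supportFn_of_closedBall_subset hK hε.le hεK (mem_sphere_zero_iff_norm.1 hv))
      (Real.rpow_nonneg (hfpos v hv).le p) (hB _ ⟨v, hv, rfl⟩) hMt
  calc _ ≤ M * |t| * radialFn K u := abs_radialFn_wulff_sub_le hK hKconv (interior_subset hKo)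
        (by positivity) (by linarith) hclose (ne_of_mem_sphere hu one_ne_zero)
    _ ≤ M * |t| * R := by
        gcongr; exact radialFn_le_of_subset_closedBall hR.le hKR (mem_sphere_zero_iff_norm.1 hu)
    _ = M * R * |t| := by ring

theorem radialFn_wulff_lipschitz_in_t (n : ℕ) (hn : 2 ≤ n) (p : ℝ) (hp : 0 < p)
    (K : Set (EuclideanSpace ℝ (Fin n)))
    (hK : IsCompact K) (hKconv : Convex ℝ K) (hKo : (0 : EuclideanSpace ℝ (Fin n)) ∈ interior K)
    (f : EuclideanSpace ℝ (Fin n) → ℝ)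
    (hf : ContinuousOn f (sphere (0 : EuclideanSpace ℝ (Fin n)) 1))
    (hfpos : ∀ v ∈ sphere (0 : EuclideanSpace ℝ (Fin n)) 1, 0 < f v) :
    ∃ δ > (0 : ℝ), ∃ M > (0 : ℝ),
      ∀ u ∈ sphere (0 : EuclideanSpace ℝ (Fin n)) 1, ∀ t ∈ Set.Ioo (-δ) δ,
        |radialFn (wulff n (fun v => (supportFn K v ^ p + t * f v ^ p) ^ (1 / p))) u
          - radialFn K u| ≤ M * |t| :=
  radialFn_wulff_lipschitz_in_t_general n p hp K hK hKconv hKo f hf hfpos
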